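/- With the notation of the previous statement (tree T ⊆ 𝒮 = ℕ^{<ℕ}, vectors a_s, b_s ∈ ℓ¹(𝒮), and W_T the closed span of {a_s ⊕ b_s : s ∈ T}): W_T ∩ (ℓ¹(𝒮) ⊕ {0}) ≠ {0} if and only if T is ill-founded, i.e. there exists α ∈ ℕ^ℕ with (α_1, …, α_n) ∈ T for all n ∈ ℕ. -/

import Mathlib

/-- `δ_t ∈ ℓ¹(ℕ^{<ℕ})`, the indicator of the singleton `{t}`. -/
noncomputable def deltaVec (t : List ℕ) : lp (fun _ : List ℕ => ℝ) 1 := lp.single 1 t 1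

/-- `a_s = ∑_{t ⪯ s} 2^{-|t|} δ_t`. -/
noncomputable def aVec (s : List ℕ) : lp (fun _ : List ℕ => ℝ) 1 :=
  ∑ t ∈ s.inits.toFinset, (2 : ℝ) ^ (-(t.length : ℤ)) • deltaVec t

/-- `b_s = 2^{-|s|} δ_s`. -/
noncomputable def bVec (s : List ℕ) : lp (fun _ : List ℕ => ℝ) 1 :=
  (2 : ℝ) ^ (-(s.length : ℤ)) • deltaVec s

/-- `W_T`, the closed linear span of `{a_s ⊕ b_s : s ∈ T}` in `ℓ¹ ⊕ ℓ¹`. -/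
noncomputable def Wspace (T : Set (List ℕ)) :
    Set ((lp (fun _ : List ℕ => ℝ) 1) × (lp (fun _ : List ℕ => ℝ) 1)) :=
  closure ((Submodule.span ℝ ((fun s => (aVec s, bVec s)) '' T) : Submodule ℝ _) : Set _)

/-!
Every `(x, y) ∈ W_T` satisfies two closed linear conditions, because the generators do:
`x` vanishes off `T`, and `x(t) - y(t) = 2 ∑ₙ x(t⌢n)` for every node `t` (for a generator,
both sides equal `2^{-|t|-1}` when `t` is a proper prefix of `s`, and `0` otherwise).
So if `y = 0` and `x ≠ 0`, every node in the support of `x` has a child in the support, and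
following children from one such node traces an infinite branch of `T`.
Conversely, along a branch `α` the vectors `a_{α|n}` form a Cauchy sequence while
`‖b_{α|n}‖ = 2^{-n} → 0`; the limit `(a, 0)` lies in `W_T` and `a(∅) = 1`.
-/

open Function Filter Topology
open scoped lp

section Branch

variable {β : Type*}

theorem List.exists_map_range_prefix {u : ℕ → List β} (hu : ∀ k, u k <+: u (k + 1))
    (hlen : ∀ k, k ≤ (u k).length) : ∃ α : ℕ → β, ∀ n, (List.range n).map α <+: u n := by
  have hmono {m n : ℕ} (h : m ≤ n) : u m <+: u n :=
    Nat.le_induction List.prefix_rfl (fun _ _ ih => ih.trans (hu _)) n h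
  refine ⟨fun k => (u (k + 1))[k]'(hlen (k + 1)), fun n =>
    List.prefix_iff_getElem.2 ⟨by simpa using hlen n, fun k hk => ?_⟩⟩
  simp only [List.length_map, List.length_range] at hk
  simpa using (hmono (Nat.succ_le_of_lt hk)).getElem _

theorem exists_branch_of_forall_exists_concat {P : List β → Prop}
    (hP : ∀ t, P t → ∃ b, P (t ++ [b])) {t₀ : List β} (h₀ : P t₀) :
    ∃ α : ℕ → β, ∀ n, ∃ s, P s ∧ (List.range n).map α <+: s := by
  have : Nonempty β := (hP t₀ h₀).nonempty
  choose! c hc using hP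
  let u : ℕ → List β := fun k => (fun t => t ++ [c t])^[k] t₀
  have hu_succ (k : ℕ) : u (k + 1) = u k ++ [c (u k)] := iterate_succ_apply' _ _ _
  have hu (k : ℕ) : P (u k) := by
    induction k with
    | zero => exact h₀
    | succ k ih => rw [hu_succ]; exact hc _ ih
  have hlen (k : ℕ) : k ≤ (u k).length := by
    induction k with
    | zero => exact Nat.zero_le _
    | succ k ih => rw [hu_succ, List.length_append, List.length_singleton]; omega
  obtain ⟨α, hα⟩ := List.exists_map_range_prefix
    (fun k => hu_succ k ▸ List.prefix_append _ _) hlen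
  exact ⟨α, fun n => ⟨u n, hu n, hα n⟩⟩

end Branch

namespace lp

variable {ι κ E : Type*} [NormedAddCommGroup E]

theorem summable_norm (f : ℓ¹(ι, E)) : Summable fun i => ‖f i‖ := by
  simpa using f.2.summable (by norm_num)

theorem tsum_norm_eq_norm (f : ℓ¹(ι, E)) : ∑' i, ‖f i‖ = ‖f‖ := by
  simpa using (hasSum_norm (by norm_num) f).tsum_eq

theorem norm_tsum_comp_le (f : ℓ¹(ι, E)) {g : κ → ι} (hg : Injective g) :
    ‖∑' k, f (g k)‖ ≤ ‖f‖ := calc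
  ‖∑' k, f (g k)‖ ≤ ∑' k, ‖f (g k)‖ :=
    norm_tsum_le_tsum_norm ((summable_norm f).comp_injective hg)
  _ ≤ ∑' i, ‖f i‖ := tsum_comp_le_tsum_of_inj (summable_norm f) (fun _ => norm_nonneg _) hg
  _ = ‖f‖ := tsum_norm_eq_norm f

variable [NormedSpace ℝ E] [CompleteSpace E]

noncomputable def tsumCompCLM {g : κ → ι} (hg : Injective g) : ℓ¹(ι, E) →L[ℝ] E :=
  LinearMap.mkContinuous
    { toFun f := ∑' k, f (g k)
      map_add' f f' := by
        rw [← ((summable_norm f).comp_injective hg).of_norm.tsum_add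
          ((summable_norm f').comp_injective hg).of_norm]
        rfl
      map_smul' c f := ((summable_norm f).comp_injective hg).of_norm.tsum_const_smul c }
    1 (fun f => by rw [one_mul]; exact norm_tsum_comp_le f hg)

end lp

theorem deltaVec_apply (t u : List ℕ) : deltaVec t u = if u = t then 1 else 0 := by
  simp [deltaVec, lp.single_apply, Pi.single_apply]

theorem norm_deltaVec (t : List ℕ) : ‖deltaVec t‖ = 1 := by
  simp [deltaVec, lp.norm_single]

theorem aVec_apply (s u : List ℕ) :
    aVec s u = if u <+: s then (2 : ℝ) ^ (-(u.length : ℤ)) else 0 := by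
  rw [aVec, lp.coeFn_sum, Finset.sum_apply]
  simp [deltaVec_apply, List.mem_inits]

theorem bVec_apply (s u : List ℕ) :
    bVec s u = if u = s then (2 : ℝ) ^ (-(s.length : ℤ)) else 0 := by
  simp [bVec, deltaVec_apply]

theorem norm_bVec (s : List ℕ) : ‖bVec s‖ = (2 : ℝ) ^ (-(s.length : ℤ)) := by
  simp [bVec, norm_smul, norm_deltaVec]

theorem aVec_concat (s : List ℕ) (m : ℕ) :
    aVec (s ++ [m]) = aVec s + (2 : ℝ) ^ (-(s.length + 1 : ℤ)) • deltaVec (s ++ [m]) := by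
  ext u
  simp only [lp.coeFn_add, lp.coeFn_smul, Pi.add_apply, Pi.smul_apply, aVec_apply, deltaVec_apply,
    List.prefix_concat_iff, smul_eq_mul]
  by_cases hu : u = s ++ [m]
  · have : ¬ s ++ [m] <+: s := fun h => by simpa using h.length_le
    simp [hu, this]
  · simp [hu]

theorem aVec_sub_bVec_apply (s t : List ℕ) :
    aVec s t - bVec s t = 2 * ∑' n : ℕ, aVec s (t ++ [n]) := by
  by_cases hts : t <+: s
  · obtain ⟨d, rfl⟩ := hts
    cases d with
    | nil =>
      have : ∀ n, ¬ t ++ [n] <+: t := fun n h => by simpa using h.length_le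
      simp [aVec_apply, bVec_apply, this]
    | cons n₀ d =>
      rw [tsum_eq_single n₀ fun n hn => by simp [aVec_apply, hn]]
      simp [aVec_apply, bVec_apply, zpow_add₀, zpow_neg]
  · have : ∀ n, ¬ t ++ [n] <+: s := fun n h => hts ((List.prefix_append t [n]).trans h)
    have hne : t ≠ s := by rintro rfl; exact hts List.prefix_rfl
    simp [aVec_apply, bVec_apply, this, hts, hne]

theorem ContinuousLinearMap.map_eq_zero_of_mem_closure_span {R M N : Type*} [Semiring R]
    [TopologicalSpace M] [AddCommMonoid M] [Module R M] [TopologicalSpace N] [AddCommMonoid N]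
    [Module R N] [T1Space N] (φ : M →L[R] N) {s : Set M} (hs : ∀ x ∈ s, φ x = 0) {x : M}
    (hx : x ∈ closure (Submodule.span R s : Set M)) : φ x = 0 :=
  closure_minimal (Submodule.span_le (p := LinearMap.ker (φ : M →ₗ[R] N)).2 hs) φ.isClosed_ker hx

section Wspace

variable {T : Set (List ℕ)} {x : ℓ¹(List ℕ, ℝ) × ℓ¹(List ℕ, ℝ)}

theorem fst_apply_eq_zero_of_mem_Wspace (hT : ∀ s ∈ T, ∀ t : List ℕ, t <+: s → t ∈ T)
    (hx : x ∈ Wspace T) {t : List ℕ} (ht : t ∉ T) : x.1 t = 0 := by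
  refine ((lp.evalCLM ℝ _ 1 t).comp (.fst ℝ _ _)).map_eq_zero_of_mem_closure_span ?_ hx
  rintro _ ⟨s, hs, rfl⟩
  simpa [lp.evalCLM, aVec_apply] using fun hts => ht (hT s hs t hts)

theorem fst_sub_snd_apply_of_mem_Wspace (hx : x ∈ Wspace T) (t : List ℕ) :
    x.1 t - x.2 t = 2 * ∑' n : ℕ, x.1 (t ++ [n]) := by
  have hchild : Injective fun n : ℕ => t ++ [n] := fun _ _ h => by simpa using h
  let eval := lp.evalCLM ℝ (fun _ : List ℕ => ℝ) 1 t
  let φ : ℓ¹(List ℕ, ℝ) × ℓ¹(List ℕ, ℝ) →L[ℝ] ℝ := eval.comp (.fst ℝ _ _) - eval.comp (.snd ℝ _ _)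
    - (2 : ℝ) • (lp.tsumCompCLM hchild).comp (.fst ℝ _ _)
  have hφ (y : ℓ¹(List ℕ, ℝ) × ℓ¹(List ℕ, ℝ)) :
      φ y = y.1 t - y.2 t - 2 * ∑' n : ℕ, y.1 (t ++ [n]) := rfl
  have := φ.map_eq_zero_of_mem_closure_span (by
    rintro _ ⟨s, -, rfl⟩
    rw [hφ, aVec_sub_bVec_apply, sub_self]) hx
  rw [hφ] at this
  linarith

end Wspace

theorem exists_branch_of_mem_Wspace {T : Set (List ℕ)}
    (hT : ∀ s ∈ T, ∀ t : List ℕ, t <+: s → t ∈ T) {x : ℓ¹(List ℕ, ℝ) × ℓ¹(List ℕ, ℝ)}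
    (hx : x ∈ Wspace T) (hx₂ : x.2 = 0) (hx₀ : x ≠ 0) :
    ∃ α : ℕ → ℕ, ∀ n : ℕ, (List.range n).map α ∈ T := by
  have hchild (t : List ℕ) (ht : x.1 t ≠ 0) : ∃ n, x.1 (t ++ [n]) ≠ 0 := by
    by_contra! h
    have := fst_sub_snd_apply_of_mem_Wspace hx t
    simp [hx₂, h, ht] at this
  obtain ⟨t₀, ht₀⟩ : ∃ t₀, x.1 t₀ ≠ 0 := by
    by_contra! h
    exact hx₀ (Prod.ext (lp.ext (funext h)) hx₂)
  obtain ⟨α, hα⟩ := exists_branch_of_forall_exists_concat hchild ht₀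
  refine ⟨α, fun n => ?_⟩
  obtain ⟨s, hs, hαs⟩ := hα n
  exact hT s (of_not_not fun hsT => hs (fst_apply_eq_zero_of_mem_Wspace hT hx hsT)) _ hαs

theorem exists_mem_Wspace_of_branch {T : Set (List ℕ)} {α : ℕ → ℕ}
    (hα : ∀ n : ℕ, (List.range n).map α ∈ T) :
    ∃ x : ℓ¹(List ℕ, ℝ) × ℓ¹(List ℕ, ℝ), x ∈ Wspace T ∧ x.2 = 0 ∧ x ≠ 0 := by
  set s : ℕ → List ℕ := fun n => (List.range n).map α with hs
  have hs_length (n : ℕ) : (s n).length = n := by simp [hs]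
  have hs_succ (n : ℕ) : s (n + 1) = s n ++ [α n] := by simp [hs, List.range_succ]
  have hdist (n : ℕ) : dist (aVec (s n)) (aVec (s (n + 1))) ≤ 1 / 2 / 2 ^ n := by
    rw [hs_succ, aVec_concat, dist_eq_norm, sub_add_cancel_left, norm_neg, norm_smul,
      norm_deltaVec, hs_length]
    simp [zpow_add₀, zpow_neg, div_eq_mul_inv, mul_comm]
  obtain ⟨a, ha⟩ := cauchySeq_tendsto_of_complete (cauchySeq_of_le_geometric_two hdist)
  have hb : Tendsto (fun n => bVec (s n)) atTop (𝓝 0) := by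
    rw [tendsto_zero_iff_norm_tendsto_zero]
    simpa [norm_bVec, hs_length, Function.comp_def] using tendsto_inv_atTop_zero.comp
      (tendsto_pow_atTop_atTop_of_one_lt (by norm_num : (1 : ℝ) < 2))
  have hmem : (a, 0) ∈ Wspace T := mem_closure_of_tendsto (ha.prodMk_nhds hb)
    (Eventually.of_forall fun n => Submodule.subset_span ⟨s n, hα n, rfl⟩)
  have ha_nil : a [] = 1 := by
    refine tendsto_nhds_unique (((lp.evalCLM ℝ _ 1 []).continuous.tendsto a).comp ha) ?_
    simp [lp.evalCLM, aVec_apply, Function.comp_def]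
  exact ⟨(a, 0), hmem, rfl, fun h => by simpa [ha_nil] using congrArg (fun y => y.1 []) h⟩

/-- `W_T ∩ (ℓ¹ ⊕ {0}) ≠ {0}` iff the tree `T` is ill-founded, i.e. has an
infinite branch. -/
theorem Wspace_inter_nontrivial_iff_illFounded
    (T : Set (List ℕ)) (hT : ∀ s ∈ T, ∀ t : List ℕ, t <+: s → t ∈ T) :
    (∃ x : (lp (fun _ : List ℕ => ℝ) 1) × (lp (fun _ : List ℕ => ℝ) 1),
        x ∈ Wspace T ∧ x.2 = 0 ∧ x ≠ 0) ↔
      ∃ α : ℕ → ℕ, ∀ n : ℕ, (List.range n).map α ∈ T :=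
  ⟨fun ⟨_, hx, hx₂, hx₀⟩ => exists_branch_of_mem_Wspace hT hx hx₂ hx₀,
    fun ⟨_, hα⟩ => exists_mem_Wspace_of_branch hα⟩
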